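/- Let n ≥ 2 and let k satisfy F(n) ≤ k < F(n+1). For 0 ≤ j ≤ k define length-k words z_j from the infinite Fibonacci word f_∞ by: z_j = f_∞[j .. j+k) for 0 ≤ j ≤ F(n)−1, and z_j = f_∞[j+F(n+1)−k−1 .. j+F(n+1)−1) for F(n) ≤ j ≤ k. Then z_0, z_1, …, z_k are pairwise distinct, every length-k factor of f_∞ equals z_j for some 0 ≤ j ≤ k, and the position of the first occurrence of z_j in f_∞ is strictly increasing in j (the z_j are listed in the order of their first occurrences). -/

import Mathlib

/-- Fibonacci numbers: F(0)=1, F(1)=1, F(n+2)=F(n+1)+F(n). -/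
def F : ℕ → ℕ
  | 0 => 1
  | 1 => 1
  | n + 2 => F (n + 1) + F n

/-- Finite Fibonacci words over {a,b} coded as Fin 2 (a=0, b=1). -/
def fibWord : ℕ → List (Fin 2)
  | 0 => [0]
  | 1 => [1]
  | n + 2 => fibWord (n + 1) ++ fibWord n

/-- The infinite Fibonacci word f_∞ : ℕ → Fin 2 (each f_n is a prefix of f_{n+1}, and
F(i+2) > i, so the i-th letter of f_∞ is the i-th letter of f_{i+2}). -/
def fibInf (i : ℕ) : Fin 2 := (fibWord (i + 2)).getD i 0

/-- The length-k factor of f_∞ starting at position s, i.e. f_∞[s .. s+k). -/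
def fibFactor (s k : ℕ) : Fin k → Fin 2 := fun t => fibInf (s + t.val)

/-- The words z_0, …, z_k of Theorem (Chuan–Ho): z_j = f_∞[j .. j+k) for 0 ≤ j ≤ F(n)−1,
and z_j = f_∞[j+F(n+1)−k−1 .. j+F(n+1)−1) for F(n) ≤ j ≤ k. -/
def zword (n k j : ℕ) : Fin k → Fin 2 :=
  if j < F n then fibFactor j k else fibFactor (j + F (n + 1) - k - 1) k

/-!
Since `f_n f_{n+1}` and `f_{n+1} f_n` differ only in their last two letters, `f_∞` has period
`F n` on its prefix of length `F (n + 2) - 2`. Shifting by these local periods moves every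
factor of length `k < F (n + 1)` to an earlier position below `F (n + 1)`, where it visibly is
one of the `z_j`, and never earlier than the position defining that `z_j`.

An eventual period `d` of `f_∞`, combined with the coprime local periods `F m` and `F (m + 1)`
by a weak Fine–Wilf argument, would give period `1` on a long stretch; but `f_∞` has no three
equal consecutive letters. So `f_∞` is not eventually periodic, and by Morse–Hedlund it has at
least `k + 1` factors of length `k`. These lie among `z_0, …, z_k`, which are therefore pairwise
distinct; then the position defining `z_j` is its first occurrence.
-/

open Filter

section Combinatorics

variable {α : Type*}

def HasPeriodOn (u : ℕ → α) (p L R : ℕ) : Prop :=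
  ∀ i, L ≤ i → i + p < R → u (i + p) = u i

namespace HasPeriodOn

variable {u : ℕ → α} {L : ℕ}

theorem mono {a R L' R' : ℕ} (h : HasPeriodOn u a L R) (hL : L ≤ L') (hR : R' ≤ R) :
    HasPeriodOn u a L' R' :=
  fun i hi hiR => h i (hL.trans hi) (hiR.trans_le hR)

theorem sub {a b R : ℕ} (ha : HasPeriodOn u a L R) (hb : HasPeriodOn u b L R) (hba : b ≤ a) :
    HasPeriodOn u (a - b) L (R - b) := by
  intro i hi hiR
  have h := hb (i + (a - b)) (by omega) (by omega)
  rw [show i + (a - b) + b = i + a by omega] at h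
  rw [← h, ha i hi (by omega)]

theorem gcd {a b R : ℕ} (ha : HasPeriodOn u a L R) (hb : HasPeriodOn u b L R) :
    HasPeriodOn u (Nat.gcd a b) L (R - (a + b)) := by
  rcases Nat.eq_zero_or_pos a with rfl | ha0
  · simpa using hb.mono le_rfl (by omega)
  rcases Nat.eq_zero_or_pos b with rfl | hb0
  · simpa using ha.mono le_rfl (by omega)
  rcases le_total b a with hba | hab
  · have h := gcd (ha.sub hb hba) (hb.mono le_rfl (Nat.sub_le R b))
    rw [Nat.gcd_sub_self_left hba] at h
    exact h.mono le_rfl (by omega)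
  · have h := gcd (ha.mono le_rfl (Nat.sub_le R a)) (hb.sub ha hab)
    rw [Nat.gcd_sub_self_right hab] at h
    exact h.mono le_rfl (by omega)
termination_by a + b

end HasPeriodOn

variable (u : ℕ → α)

def factors (k : ℕ) : Set (Fin k → α) :=
  Set.range fun s (t : Fin k) => u (s + t)

def IsEventuallyPeriodic : Prop :=
  ∃ d, 0 < d ∧ ∀ᶠ i in atTop, u (i + d) = u i

theorem image_init_factors (k : ℕ) : Fin.init '' factors u (k + 1) = factors u k := by
  rw [factors, factors, ← Set.range_comp]
  rfl

theorem isEventuallyPeriodic_of_injOn_init [Finite α] {k : ℕ}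
    (h : Set.InjOn Fin.init (factors u (k + 1))) : IsEventuallyPeriodic u := by
  set w : ℕ → Fin (k + 1) → α := fun s t => u (s + t)
  have step : ∀ s t, w s = w t → w (s + 1) = w (t + 1) := by
    intro s t hst
    refine h ⟨s + 1, rfl⟩ ⟨t + 1, rfl⟩ (funext fun i => ?_)
    have hi := congrFun hst i.succ
    simp only [w, Fin.init, Fin.val_succ, Fin.val_castSucc] at hi ⊢
    convert hi using 2 <;> ring
  obtain ⟨s, t, hne, hst⟩ := Finite.exists_ne_map_eq_of_infinite w
  wlog hlt : s < t generalizing s t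
  · exact this t s hne.symm hst.symm (by omega)
  have shift : ∀ i, w (s + i) = w (t + i) := fun i => by
    induction i with
    | zero => exact hst
    | succ i ih => exact step _ _ ih
  refine ⟨t - s, by omega, eventually_atTop.mpr ⟨s, fun i hi => ?_⟩⟩
  have h0 := congrFun (shift (i - s)) 0
  simp only [w, Fin.val_zero, add_zero] at h0
  rw [show i + (t - s) = t + (i - s) by omega, ← h0, show s + (i - s) = i by omega]

theorem succ_le_ncard_factors [Finite α] (hu : ¬ IsEventuallyPeriodic u) (k : ℕ) :
    k + 1 ≤ (factors u k).ncard := by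
  induction k with
  | zero => exact (Set.ncard_pos (Set.toFinite _)).mpr ⟨_, 0, rfl⟩
  | succ k ih =>
    have hle : (factors u k).ncard ≤ (factors u (k + 1)).ncard :=
      image_init_factors u k ▸ Set.ncard_image_le
    have hne : (factors u (k + 1)).ncard ≠ (factors u k).ncard := fun heq =>
      hu (isEventuallyPeriodic_of_injOn_init u (k := k)
        (Set.injOn_of_ncard_image_eq (by rw [image_init_factors, heq])))
    omega

end Combinatorics

section FibonacciNumbers

theorem F_add_two (n : ℕ) : F (n + 2) = F (n + 1) + F n := rfl

theorem F_pos : ∀ n, 0 < F n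
  | 0 | 1 => Nat.one_pos
  | n + 2 => by rw [F_add_two]; exact Nat.add_pos_right _ (F_pos n)

theorem F_le_F_succ : ∀ n, F n ≤ F (n + 1)
  | 0 => le_rfl
  | _ + 1 => Nat.le_add_right _ _

theorem F_mono : Monotone F := monotone_nat_of_le_succ F_le_F_succ

theorem F_succ_le_two_mul : ∀ n, F (n + 1) ≤ 2 * F n
  | 0 => by decide
  | n + 1 => by rw [F_add_two]; have := F_le_F_succ n; omega

theorem le_F : ∀ n, n ≤ F n
  | 0 | 1 => by decide
  | n + 2 => by rw [F_add_two]; have := le_F (n + 1); have := F_pos n; omega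

theorem F_coprime : ∀ n, Nat.Coprime (F n) (F (n + 1))
  | 0 => by decide
  | n + 1 => by rw [F_add_two, Nat.coprime_self_add_right]; exact (F_coprime n).symm

theorem exists_F_le_lt_F_succ {s : ℕ} (hs : 1 ≤ s) : ∃ m, F m ≤ s ∧ s < F (m + 1) := by
  induction s, hs using Nat.le_induction with
  | base => exact ⟨1, le_rfl, by decide⟩
  | succ s _ ih =>
    obtain ⟨m, hm, hs⟩ := ih
    rcases (Nat.succ_le_of_lt hs).lt_or_eq with h | h
    · exact ⟨m, by omega, h⟩
    · exact ⟨m + 1, h.ge, by rw [F_add_two]; have := F_pos m; omega⟩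

end FibonacciNumbers

section FibonacciWord

theorem fibWord_length : ∀ n, (fibWord n).length = F n
  | 0 | 1 => rfl
  | n + 2 => by
    rw [fibWord, List.length_append, fibWord_length (n + 1), fibWord_length n, F_add_two]

theorem fibWord_prefix {a b : ℕ} (ha : 1 ≤ a) (hab : a ≤ b) : fibWord a <+: fibWord b := by
  induction b, hab using Nat.le_induction with
  | base => exact List.prefix_refl _
  | succ b hb ih =>
    obtain ⟨c, rfl⟩ : ∃ c, b = c + 1 := ⟨b - 1, by omega⟩
    exact ih.trans (List.prefix_append _ _)

theorem getElem?_fibWord_of_le {a b i : ℕ} (ha : 1 ≤ a) (hab : a ≤ b) (hi : i < F a) :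
    (fibWord b)[i]? = (fibWord a)[i]? := by
  obtain ⟨t, ht⟩ := fibWord_prefix ha hab
  rw [← ht, List.getElem?_append_left (by rwa [fibWord_length])]

theorem getElem?_fibWord {n i : ℕ} (hn : 1 ≤ n) (hi : i < F n) :
    (fibWord n)[i]? = some (fibInf i) := by
  have hi2 : i < (fibWord (i + 2)).length := by
    rw [fibWord_length]; exact (le_F (i + 2)).trans_lt' (by omega)
  rw [fibInf, List.getD_eq_getElem _ _ hi2, ← List.getElem?_eq_getElem hi2]
  rcases le_total n (i + 2) with h | h
  · exact (getElem?_fibWord_of_le hn h hi).symm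
  · exact getElem?_fibWord_of_le (by omega) h (by rwa [← fibWord_length])

theorem take_fibWord_append_comm {n : ℕ} (hn : 1 ≤ n) :
    (fibWord (n + 1) ++ fibWord n).take (F (n + 2) - 2) =
      (fibWord n ++ fibWord (n + 1)).take (F (n + 2) - 2) := by
  induction n, hn using Nat.le_induction with
  | base => decide
  | succ n hn ih =>
    have hlen : F (n + 3) - 2 = (fibWord (n + 1)).length + (F (n + 2) - 2) := by
      have : F (n + 3) = F (n + 2) + F (n + 1) := rfl
      rw [fibWord_length]; have := le_F (n + 2); omega
    calc (fibWord (n + 2) ++ fibWord (n + 1)).take (F (n + 3) - 2)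
        = (fibWord (n + 1) ++ (fibWord n ++ fibWord (n + 1))).take (F (n + 3) - 2) := by
          rw [fibWord, List.append_assoc]
      _ = (fibWord (n + 1) ++ (fibWord (n + 1) ++ fibWord n)).take (F (n + 3) - 2) := by
          rw [hlen, List.take_length_add_append, List.take_length_add_append, ih]

theorem fibInf_hasPeriodOn_F {n : ℕ} (hn : 1 ≤ n) :
    HasPeriodOn fibInf (F n) 0 (F (n + 2) - 2) := by
  intro i _ hi
  apply Option.some_injective
  rw [← getElem?_fibWord (n := n + 2) (by omega) (by omega),
    ← getElem?_fibWord (n := n + 1) (by omega) (by have := F_add_two n; omega)]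
  calc (fibWord (n + 2))[i + F n]?
      = ((fibWord (n + 1) ++ fibWord n).take (F (n + 2) - 2))[i + F n]? := by
        rw [List.getElem?_take, if_pos hi]; rfl
    _ = ((fibWord n ++ fibWord (n + 1)).take (F (n + 2) - 2))[i + F n]? := by
        rw [take_fibWord_append_comm hn]
    _ = (fibWord (n + 1))[i]? := by
        rw [List.getElem?_take, if_pos hi,
          List.getElem?_append_right (by rw [fibWord_length]; omega),
          fibWord_length, Nat.add_sub_cancel]

theorem fibFactor_eq_sub_F {n s k : ℕ} (hn : 1 ≤ n) (hs : F n ≤ s)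
    (hsk : s + k + 2 ≤ F (n + 2)) :
    fibFactor s k = fibFactor (s - F n) k := by
  funext t
  have ht := t.isLt
  have h := fibInf_hasPeriodOn_F hn (s - F n + t) (Nat.zero_le _) (by omega)
  rwa [show s - F n + t + F n = s + t by omega] at h

theorem exists_lt_fibFactor_eq {n s k : ℕ} (hk : k < F n) (hs : F n ≤ s) :
    ∃ s' < s, fibFactor s' k = fibFactor s k := by
  obtain ⟨m, hms, hsm⟩ := exists_F_le_lt_F_succ ((F_pos n).trans_le hs)
  have hnm : n ≤ m := by
    by_contra! h
    have := F_mono (show m + 1 ≤ n by omega)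
    omega
  have hm : 1 ≤ m := Nat.pos_of_ne_zero fun h => by
    subst h; exact absurd (hms.trans_lt hsm) (by decide)
  have := F_mono hnm
  have := F_pos m
  exact ⟨s - F m, by omega, (fibFactor_eq_sub_F hm hms (by rw [F_add_two]; omega)).symm⟩

theorem exists_le_lt_F_fibFactor_eq {n k : ℕ} (hk : k < F n) (s : ℕ) :
    ∃ s' ≤ s, s' < F n ∧ fibFactor s' k = fibFactor s k := by
  induction s using Nat.strong_induction_on with
  | _ s ih =>
    by_cases hs : s < F n
    · exact ⟨s, le_rfl, hs, rfl⟩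
    obtain ⟨s', hs', h⟩ := exists_lt_fibFactor_eq hk (not_lt.mp hs)
    obtain ⟨s'', hs'', hlt, h'⟩ := ih s' hs'
    exact ⟨s'', by omega, hlt, h'.trans h⟩

theorem fibInf_not_const_three (i : ℕ) :
    ¬ (fibInf (i + 1) = fibInf i ∧ fibInf (i + 2) = fibInf (i + 1)) := by
  obtain ⟨i', -, hi', h⟩ := exists_le_lt_F_fibFactor_eq (n := 4) (k := 3) (by decide) i
  have e₀ : fibInf i' = fibInf i := congrFun h 0
  have e₁ : fibInf (i' + 1) = fibInf (i + 1) := congrFun h 1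
  have e₂ : fibInf (i' + 2) = fibInf (i + 2) := congrFun h 2
  rw [← e₀, ← e₁, ← e₂]
  have : i' < 5 := hi'
  interval_cases i' <;> decide

theorem not_isEventuallyPeriodic_fibInf : ¬ IsEventuallyPeriodic fibInf := by
  rintro ⟨d, hd, hper⟩
  obtain ⟨s, hs⟩ := eventually_atTop.mp hper
  have hd' : ∀ R, HasPeriodOn fibInf d s R := fun _ i hi _ => hs i hi
  set m := s + 3 * d + 5
  have hFm : s + 3 * d + 6 ≤ F (m + 1) := le_F (m + 1)
  have : F (m + 2) = F (m + 1) + F m := rfl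
  have : F (m + 1 + 2) = F (m + 1 + 1) + F (m + 1) := rfl
  have := F_le_F_succ (m + 1)
  have h₁ := (hd' _).gcd ((fibInf_hasPeriodOn_F (n := m) (by omega)).mono (Nat.zero_le s) le_rfl)
  have h₂ :=
    (hd' _).gcd ((fibInf_hasPeriodOn_F (n := m + 1) (by omega)).mono (Nat.zero_le s) le_rfl)
  set g₁ := Nat.gcd d (F m)
  set g₂ := Nat.gcd d (F (m + 1))
  have hg : Nat.gcd g₁ g₂ = 1 :=
    ((F_coprime m).coprime_dvd_left (Nat.gcd_dvd_right _ _)).coprime_dvd_right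
      (Nat.gcd_dvd_right _ _)
  have hg₁ : g₁ ≤ d := Nat.gcd_le_left _ hd
  have hg₂ : g₂ ≤ d := Nat.gcd_le_left _ hd
  -- period `1` survives on `[s, F (m + 1) - 2 - 3 d)`, which the choice of `m` makes long enough
  have h₃ := (h₁.mono le_rfl (R' := F (m + 1) - 2 - d) (by omega)).gcd
    (h₂.mono le_rfl (R' := F (m + 1) - 2 - d) (by omega))
  rw [hg] at h₃
  exact fibInf_not_const_three s ⟨h₃ s le_rfl (by omega), h₃ (s + 1) (by omega) (by omega)⟩

end FibonacciWord

section ChuanHo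

def zwordStart (n k j : ℕ) : ℕ := if j < F n then j else j + F (n + 1) - k - 1

theorem zword_eq_fibFactor (n k j : ℕ) : zword n k j = fibFactor (zwordStart n k j) k := by
  unfold zword zwordStart
  split_ifs <;> rfl

theorem strictMono_zwordStart {n k : ℕ} (hk : k < F (n + 1)) : StrictMono (zwordStart n k) := by
  intro j j' hjj'
  unfold zwordStart
  split_ifs <;> omega

theorem exists_zword_eq_fibFactor {n k : ℕ} (hk₁ : F n ≤ k) (hk₂ : k < F (n + 1))
    (s : ℕ) :
    ∃ j ≤ k, zwordStart n k j ≤ s ∧ fibFactor s k = zword n k j := by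
  have hn : 1 ≤ n := Nat.pos_of_ne_zero fun h => by
    subst h; exact absurd (hk₁.trans_lt hk₂) (by decide)
  obtain ⟨s', hs's, hs', hfac⟩ := exists_le_lt_F_fibFactor_eq hk₂ s
  suffices ∃ j ≤ k, zwordStart n k j ≤ s' ∧ fibFactor s' k = zword n k j by
    obtain ⟨j, hj, hle, h⟩ := this
    exact ⟨j, hj, hle.trans hs's, hfac ▸ h⟩
  have := F_add_two n
  by_cases h₁ : s' < F n
  · exact ⟨s', by omega, by simp [zwordStart, h₁], by simp [zword, h₁]⟩
  by_cases h₂ : s' + k + 2 ≤ F (n + 2)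
  · have := F_succ_le_two_mul n
    have hj : s' - F n < F n := by omega
    refine ⟨s' - F n, by omega, by simp [zwordStart, hj], ?_⟩
    rw [zword, if_pos hj, fibFactor_eq_sub_F hn (not_lt.mp h₁) h₂]
  · have hj : ¬ s' + k + 1 - F (n + 1) < F n := by omega
    refine ⟨s' + k + 1 - F (n + 1), by omega, by rw [zwordStart, if_neg hj]; omega, ?_⟩
    rw [zword, if_neg hj, show s' + k + 1 - F (n + 1) + F (n + 1) - k - 1 = s' by omega]

theorem zword_injOn {n k : ℕ} (hk₁ : F n ≤ k) (hk₂ : k < F (n + 1)) :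
    Set.InjOn (zword n k) (Set.Iic k) := by
  have hsub : factors fibInf k ⊆ zword n k '' Set.Iic k := by
    rintro _ ⟨s, rfl⟩
    obtain ⟨j, hj, -, h⟩ := exists_zword_eq_fibFactor hk₁ hk₂ s
    exact ⟨j, hj, h.symm⟩
  refine Set.injOn_of_ncard_image_eq (le_antisymm Set.ncard_image_le ?_)
  calc (Set.Iic k).ncard = k + 1 := Set.ncard_Iic_nat k
    _ ≤ (factors fibInf k).ncard :=
      succ_le_ncard_factors fibInf not_isEventuallyPeriodic_fibInf k
    _ ≤ (zword n k '' Set.Iic k).ncard := Set.ncard_le_ncard hsub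

theorem sInf_setOf_fibFactor_eq_zword {n k j : ℕ} (hk₁ : F n ≤ k) (hk₂ : k < F (n + 1))
    (hj : j ≤ k) : sInf {s | fibFactor s k = zword n k j} = zwordStart n k j := by
  refine IsLeast.csInf_eq ⟨(zword_eq_fibFactor n k j).symm, fun s hs => ?_⟩
  obtain ⟨j', hj', hle, h⟩ := exists_zword_eq_fibFactor hk₁ hk₂ s
  rwa [zword_injOn hk₁ hk₂ hj' hj (h.symm.trans hs)] at hle

end ChuanHo

theorem stmt18_general (n k : ℕ) (hk1 : F n ≤ k) (hk2 : k < F (n + 1)) :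
    (∀ j ≤ k, ∀ j' ≤ k, j ≠ j' → zword n k j ≠ zword n k j') ∧
    (∀ s : ℕ, ∃ j ≤ k, fibFactor s k = zword n k j) ∧
    (∀ j j' : ℕ, j < j' → j' ≤ k →
      sInf {s : ℕ | fibFactor s k = zword n k j}
        < sInf {s : ℕ | fibFactor s k = zword n k j'}) := by
  refine ⟨fun j hj j' hj' => (zword_injOn hk1 hk2).ne hj hj', fun s => ?_,
    fun j j' hjj' hj' => ?_⟩
  · obtain ⟨j, hj, -, h⟩ := exists_zword_eq_fibFactor hk1 hk2 s
    exact ⟨j, hj, h⟩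
  · rw [sInf_setOf_fibFactor_eq_zword hk1 hk2 (hjj'.le.trans hj'),
      sInf_setOf_fibFactor_eq_zword hk1 hk2 hj']
    exact strictMono_zwordStart hk2 hjj'

/-- for n ≥ 2 and F(n) ≤ k < F(n+1), the words z_0, …, z_k are pairwise
distinct, every length-k factor of f_∞ is one of them, and their first occurrences in f_∞
appear in strictly increasing order of j. -/
theorem stmt18 (n k : ℕ) (hn : 2 ≤ n) (hk1 : F n ≤ k) (hk2 : k < F (n + 1)) :
    (∀ j ≤ k, ∀ j' ≤ k, j ≠ j' → zword n k j ≠ zword n k j') ∧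
    (∀ s : ℕ, ∃ j ≤ k, fibFactor s k = zword n k j) ∧
    (∀ j j' : ℕ, j < j' → j' ≤ k →
      sInf {s : ℕ | fibFactor s k = zword n k j}
        < sInf {s : ℕ | fibFactor s k = zword n k j'}) :=
  stmt18_general n k hk1 hk2
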